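/- Let f : (X, L_X) → (Y, L_Y) be a bounded continuous map of locally small spaces. Then the naturality square for λ commutes: for every x ∈ X, (L^wo f)_*(ext_X{x}) = ext_Y{f(x)}, where (L^wo f)_* : L_X^wo → L_Y^wo is the right Galois adjoint of the preimage frame homomorphism V ↦ f⁻¹(V), and ext_X{x} is the union of all weakly open sets of X not containing x. -/
import Mathlib


open Set TopologicalSpace

universe u



/-! ### Frames: spectra -/

/-- The set of non-unit primes of a frame. -/
def SpecS (L : Type u) [Order.Frame L] : Set L :=
  {p | p ≠ ⊤ ∧ ∀ a b : L, p = a ⊓ b → p = a ∨ p = b}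

/-- `DeltaS a = { p ∈ Spec L : a ≰ p }`. -/
def DeltaS {L : Type u} [Order.Frame L] (a : L) : Set (SpecS L) :=
  {p | ¬ a ≤ (p : L)}

variable {L M N : Type u} [Order.Frame L] [Order.Frame M] [Order.Frame N]

lemma SpecS.inf_le {p : L} (hp : p ∈ SpecS L) {a b : L} (h : a ⊓ b ≤ p) :
    a ≤ p ∨ b ≤ p := by
  have h1 : p = (p ⊔ a) ⊓ (p ⊔ b) := by
    rw [← sup_inf_left, sup_eq_left.mpr h]
  rcases hp.2 _ _ h1 with h2 | h2
  · exact Or.inl (by rw [h2]; exact le_sup_right)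
  · exact Or.inr (by rw [h2]; exact le_sup_right)

lemma DeltaS_bot : DeltaS (⊥ : L) = ∅ := by
  ext p; simp [DeltaS]

lemma DeltaS_top : DeltaS (⊤ : L) = univ := by
  ext p; simpa [DeltaS, top_le_iff] using p.2.1

lemma DeltaS_inf (a b : L) : DeltaS (a ⊓ b) = DeltaS a ∩ DeltaS b := by
  ext p
  constructor
  · intro hp
    constructor <;> · intro hle; exact hp (le_trans (by simp) hle)
  · rintro ⟨h1, h2⟩ hle
    rcases SpecS.inf_le p.2 hle with h | h
    · exact h1 h
    · exact h2 h

lemma DeltaS_sup (a b : L) : DeltaS (a ⊔ b) = DeltaS a ∪ DeltaS b := by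
  ext p
  constructor
  · intro hp
    by_cases ha : a ≤ (p : L)
    · exact Or.inr fun hb => hp (sup_le ha hb)
    · exact Or.inl ha
  · rintro (h | h) hle
    · exact h (le_trans le_sup_left hle)
    · exact h (le_trans le_sup_right hle)

lemma DeltaS_sSup (S : Set L) : DeltaS (sSup S) = ⋃ a ∈ S, DeltaS a := by
  ext p
  simp only [DeltaS, mem_setOf_eq, mem_iUnion, sSup_le_iff, not_forall]

/-- The hull-kernel topology on the spectrum of a frame: the open sets are
exactly the sets of the form `DeltaS a`. -/
def specTop (L : Type u) [Order.Frame L] : TopologicalSpace (SpecS L) where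
  IsOpen U := U ∈ Set.range (DeltaS (L := L))
  isOpen_univ := ⟨⊤, DeltaS_top⟩
  isOpen_inter := by
    rintro _ _ ⟨a, rfl⟩ ⟨b, rfl⟩
    exact ⟨a ⊓ b, DeltaS_inf a b⟩
  isOpen_sUnion := by
    intro S hS
    refine ⟨sSup {a | DeltaS a ∈ S}, ?_⟩
    rw [DeltaS_sSup]
    apply Set.Subset.antisymm
    · intro p hp
      simp only [mem_iUnion] at hp ⊢
      obtain ⟨a, ha, hpa⟩ := hp
      exact ⟨_, ha, hpa⟩
    · intro p hp
      rcases hp with ⟨U, hU, hpU⟩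
      obtain ⟨a, rfl⟩ := hS U hU
      simp only [mem_iUnion]
      exact ⟨a, hU, hpU⟩

/-! ### Right Galois adjoints -/

/-- The right Galois adjoint of a map between complete lattices. -/
def rAdj [CompleteLattice M] [CompleteLattice L] (h : L → M) : M → L :=
  fun m => sSup {l | h l ≤ m}

lemma gc_rAdj (h : FrameHom L M) : GaloisConnection ⇑h (rAdj ⇑h) := by
  intro l m
  constructor
  · intro hl; exact le_sSup hl
  · intro hl
    calc h l ≤ h (rAdj (⇑h) m) := OrderHomClass.mono h hl
      _ ≤ m := by
          rw [rAdj, map_sSup]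
          apply sSup_le
          rintro _ ⟨l', hl', rfl⟩
          exact hl'

lemma rAdj_id : rAdj (id : L → L) = id := by
  funext m
  exact le_antisymm (sSup_le fun _ h => h) (le_sSup le_rfl)

lemma rAdj_mem_SpecS (h : FrameHom L M) {p : M} (hp : p ∈ SpecS M) :
    rAdj ⇑h p ∈ SpecS L := by
  have gc := gc_rAdj h
  constructor
  · intro htop
    apply hp.1
    rw [top_le_iff.symm]
    have : h ⊤ ≤ p := (gc ⊤ p).mpr (htop ▸ le_rfl)
    simpa using this
  · intro a b hab
    have hle : h a ⊓ h b ≤ p := by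
      rw [← map_inf]
      exact (gc _ p).mpr (le_of_eq hab.symm)
    have h1 : rAdj ⇑h p ≤ a := hab ▸ inf_le_left
    have h2 : rAdj ⇑h p ≤ b := hab ▸ inf_le_right
    rcases SpecS.inf_le hp hle with hc | hc
    · exact Or.inl (le_antisymm h1 ((gc a p).mp hc))
    · exact Or.inr (le_antisymm h2 ((gc b p).mp hc))

/-! ### Way-below, continuous and spatial frames -/

/-- `b` is way below `a`. -/
def WayBelow (b a : L) : Prop :=
  ∀ D : Set L, D.Nonempty → DirectedOn (· ≤ ·) D → a ≤ sSup D → ∃ d ∈ D, b ≤ d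

/-- A continuous frame. -/
def IsContinuousFrame (L : Type u) [Order.Frame L] : Prop :=
  ∀ a : L, a = sSup {b | WayBelow b a}

/-- A spatial frame: every element is a meet of primes. -/
def IsSpatialFrame (L : Type u) [Order.Frame L] : Prop :=
  ∀ a : L, ∃ T ⊆ SpecS L, a = sInf T

/-! ### Dominating and compatible homomorphisms -/

/-- `h` is dominating with respect to the designated sublattices. -/
def Dominating (sL : Set L) (sM : Set M) (h : L → M) : Prop :=
  ∀ m ∈ sM, ∃ l ∈ sL, h l ⊓ m = m

/-- `h` is compatible with respect to the designated sublattices. -/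
def Compatible (sL : Set L) (sM : Set M) (h : L → M) : Prop :=
  ∀ l ∈ sL, ∀ m ∈ sM, h l ⊓ m ∈ sM



/-! ### Locally small spaces -/

/-- A locally small space: a set together with a smopology. -/
structure LSS : Type (u + 1) where
  X : Type u
  L : Set (Set X)
  empty_mem : ∅ ∈ L
  inter_mem : ∀ {A B : Set X}, A ∈ L → B ∈ L → A ∩ B ∈ L
  union_mem : ∀ {A B : Set X}, A ∈ L → B ∈ L → A ∪ B ∈ L
  covers : ∀ x : X, ∃ A ∈ L, x ∈ A

namespace LSS

/-- The weakly open sets: unions of subfamilies of the smopology. -/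
def wo (S : LSS.{u}) : Set (Set S.X) := {U | ∃ F ⊆ S.L, U = ⋃₀ F}

lemma mem_wo_iff {S : LSS.{u}} {U : Set S.X} :
    U ∈ S.wo ↔ ∀ x ∈ U, ∃ A ∈ S.L, x ∈ A ∧ A ⊆ U := by
  constructor
  · rintro ⟨F, hF, rfl⟩ x hx
    obtain ⟨A, hA, hxA⟩ := hx
    exact ⟨A, hF hA, hxA, fun y hy => ⟨A, hA, hy⟩⟩
  · intro h
    refine ⟨{A | A ∈ S.L ∧ A ⊆ U}, fun A hA => hA.1, ?_⟩
    apply Set.Subset.antisymm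
    · intro x hx
      obtain ⟨A, hA, hxA, hAU⟩ := h x hx
      exact ⟨A, ⟨hA, hAU⟩, hxA⟩
    · rintro x ⟨A, ⟨_, hAU⟩, hxA⟩
      exact hAU hxA

lemma L_subset_wo (S : LSS.{u}) : S.L ⊆ S.wo := by
  intro A hA
  exact ⟨{A}, by simpa using hA, by simp⟩

/-- The topology of weakly open sets. -/
def top (S : LSS.{u}) : TopologicalSpace S.X where
  IsOpen U := U ∈ S.wo
  isOpen_univ := mem_wo_iff.mpr fun x _ => by
    obtain ⟨A, hA, hxA⟩ := S.covers x
    exact ⟨A, hA, hxA, subset_univ A⟩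
  isOpen_inter := by
    intro U V hU hV
    rw [mem_wo_iff] at hU hV ⊢
    rintro x ⟨hxU, hxV⟩
    obtain ⟨A, hA, hxA, hAU⟩ := hU x hxU
    obtain ⟨B, hB, hxB, hBV⟩ := hV x hxV
    exact ⟨A ∩ B, S.inter_mem hA hB, ⟨hxA, hxB⟩, inter_subset_inter hAU hBV⟩
  isOpen_sUnion := by
    intro F hF
    rw [mem_wo_iff]
    rintro x ⟨U, hU, hxU⟩
    obtain ⟨A, hA, hxA, hAU⟩ := mem_wo_iff.mp (hF U hU) x hxU
    exact ⟨A, hA, hxA, hAU.trans (subset_sUnion_of_mem hU)⟩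

/-- The frame of weakly open sets. -/
abbrev O (S : LSS.{u}) : Type u := @Opens S.X S.top

noncomputable instance (S : LSS.{u}) : Order.Frame S.O :=
  letI := S.top
  inferInstanceAs (Order.Frame (Opens S.X))

lemma isOpen_iff_mem_wo {S : LSS.{u}} {U : Set S.X} :
    @IsOpen _ S.top U ↔ U ∈ S.wo := Iff.rfl

/-- The exterior of a point: the union of all weakly open sets omitting it. -/
def extSet (S : LSS.{u}) (x : S.X) : Set S.X := ⋃₀ {U ∈ S.wo | x ∉ U}

lemma extSet_mem_wo (S : LSS.{u}) (x : S.X) : S.extSet x ∈ S.wo := by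
  rw [mem_wo_iff]
  rintro y ⟨U, ⟨hUwo, hxU⟩, hyU⟩
  obtain ⟨A, hA, hyA, hAU⟩ := mem_wo_iff.mp hUwo y hyU
  exact ⟨A, hA, hyA, hAU.trans (subset_sUnion_of_mem ⟨hUwo, hxU⟩)⟩

/-- The exterior of a point, as an open set. -/
def extO (S : LSS.{u}) (x : S.X) : S.O :=
  letI := S.top
  ⟨S.extSet x, S.extSet_mem_wo x⟩

end LSS

/-! ### Bounded and continuous maps -/

/-- `f` is a bounded map with respect to the given smopologies. -/
def IsBdd {X Y : Type*} (LX : Set (Set X)) (LY : Set (Set Y)) (f : X → Y) : Prop :=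
  ∀ W ∈ LX, ∃ V ∈ LY, W ⊆ f ⁻¹' V

/-- `f` is a continuous map of locally small spaces. -/
def IsCt {X Y : Type*} (LX : Set (Set X)) (LY : Set (Set Y)) (f : X → Y) : Prop :=
  ∀ V ∈ LY, ∀ W ∈ LX, f ⁻¹' V ∩ W ∈ LX

lemma contW {S T : LSS.{u}} (f : S.X → T.X) (hc : IsCt S.L T.L f) :
    @Continuous S.X T.X S.top T.top f := by
  letI := S.top; letI := T.top
  rw [continuous_def]
  intro V hV
  rw [LSS.isOpen_iff_mem_wo] at hV ⊢
  rw [LSS.mem_wo_iff]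
  intro x hx
  obtain ⟨A, hA, hfA, hAV⟩ := LSS.mem_wo_iff.mp hV (f x) hx
  obtain ⟨W, hW, hxW⟩ := S.covers x
  exact ⟨f ⁻¹' A ∩ W, hc A hA W hW, ⟨hfA, hxW⟩, fun y hy => hAV hy.1⟩

/-- The preimage frame homomorphism `L^wo f` of a continuous map. -/
noncomputable def preimFH (S T : LSS.{u}) (f : S.X → T.X) (hc : IsCt S.L T.L f) :
    FrameHom T.O S.O :=
  @Opens.comap S.X T.X S.top T.top
    (@ContinuousMap.mk S.X T.X S.top T.top f (contW f hc))

lemma LSS.not_mem_extSet (S : LSS.{u}) (x : S.X) : x ∉ S.extSet x := by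
  rintro ⟨U, ⟨_, hx⟩, hxU⟩
  exact hx hxU

lemma LSS.subset_extSet {S : LSS.{u}} {U : Set S.X} (hU : U ∈ S.wo) {x : S.X}
    (hx : x ∉ U) : U ⊆ S.extSet x :=
  subset_sUnion_of_mem ⟨hU, hx⟩

/-- Naturality of `λ`: for a bounded continuous map `f` of locally small
spaces, the right Galois adjoint of the preimage frame homomorphism sends
`ext_X{x}` to `ext_Y{f(x)}`. -/
theorem lambda_naturality (S T : LSS.{u}) (f : S.X → T.X)
    (hb : IsBdd S.L T.L f) (hc : IsCt S.L T.L f) :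
    ∀ x : S.X, rAdj ⇑(preimFH S T f hc) (S.extO x) = T.extO (f x) := by
  intro x
  letI := S.top; letI := T.top
  have hcoe : ∀ V : T.O, ((preimFH S T f hc) V : Set S.X) = f ⁻¹' (V : Set T.X) :=
    fun V => rfl
  apply le_antisymm
  · rw [rAdj]
    apply sSup_le
    intro V hV
    have hVle : f ⁻¹' (V : Set T.X) ⊆ S.extSet x := hV
    intro y hy
    have hfx : f x ∉ (V : Set T.X) := fun h => S.not_mem_extSet x (hVle h)
    exact LSS.subset_extSet V.2 hfx hy
  · have hw : f ⁻¹' (T.extSet (f x)) ∈ S.wo := by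
      rw [← LSS.isOpen_iff_mem_wo]
      exact (contW f hc).isOpen_preimage _ (T.extSet_mem_wo (f x))
    have hmem : (T.extO (f x) : T.O) ∈ {V : T.O | (preimFH S T f hc) V ≤ S.extO x} := by
      show f ⁻¹' (T.extSet (f x)) ⊆ S.extSet x
      exact LSS.subset_extSet hw (fun h => T.not_mem_extSet (f x) h)
    exact le_sSup hmem
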